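/- If Γ is a maximal consistent set of L_{ELKy^r}-formulas with respect to SKYR such that Ky_a^r(φ₁,φ₂) ∉ Γ and φ₁ ∉ Γ for some agent a and formulas φ₁, φ₂, then the set {φ₁} ∪ {ψ : K_aψ ∈ Γ} is consistent with respect to SKYR. -/
import Mathlib


/-- The language L_{ELKy^r}: atoms, negation, conjunction, knowledge `K_a`,
and the relativized knowing-why operator `Ky_a^r(·,·)`. -/
inductive Formula (A P : Type) : Type
  | atom : P → Formula A P
  | neg : Formula A P → Formula A P
  | and : Formula A P → Formula A P → Formula A P
  | know : A → Formula A P → Formula A P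
  | kyr : A → Formula A P → Formula A P → Formula A P

namespace Formula

/-- Implication, defined as usual: `φ → ψ := ¬(φ ∧ ¬ψ)`. -/
def imp {A P : Type} (φ ψ : Formula A P) : Formula A P := neg (and φ (neg ψ))

/-- Falsum `⊥`, defined as usual from a fixed atom `p₀`: `p₀ ∧ ¬p₀`. -/
def fls {A P : Type} (p0 : P) : Formula A P := and (atom p0) (neg (atom p0))

/-- Verum `⊤ := ¬⊥`. -/
def tru {A P : Type} (p0 : P) : Formula A P := neg (fls p0)

end Formula

/-- Evaluation of a formula under a propositional valuation `f`, interpreting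
`¬` and `∧` classically and treating all other formulas as atomic. -/
def PropEval {A P : Type} (f : Formula A P → Prop) : Formula A P → Prop
  | .neg φ => ¬ PropEval f φ
  | .and φ ψ => PropEval f φ ∧ PropEval f ψ
  | φ => f φ

/-- `φ` is an instance of a classical propositional tautology. -/
def PropTaut {A P : Type} (φ : Formula A P) : Prop := ∀ f, PropEval f φ

/-- The Hilbert system SKYR, as derivability from a set `Γ` of premises.
`Λ` is the tautology ground and `p0` a fixed atom used to define `⊤` and `⊥`.
Necessitation rules apply only to theorems (derivability from `∅`). -/
inductive SKYR {A P : Type} (Λ : Set (Formula A P)) (p0 : P) :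
    Set (Formula A P) → Formula A P → Prop
  | hyp {Γ φ} : φ ∈ Γ → SKYR Λ p0 Γ φ
  | pt {Γ} (φ) : PropTaut φ → SKYR Λ p0 Γ φ
  | axK {Γ} (a : A) (φ ψ) :
      SKYR Λ p0 Γ ((Formula.know a (φ.imp ψ)).imp
        ((Formula.know a φ).imp (Formula.know a ψ)))
  | axT {Γ} (a : A) (φ) : SKYR Λ p0 Γ ((Formula.know a φ).imp φ)
  | ax4 {Γ} (a : A) (φ) :
      SKYR Λ p0 Γ ((Formula.know a φ).imp (Formula.know a (Formula.know a φ)))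
  | ax5 {Γ} (a : A) (φ) :
      SKYR Λ p0 Γ (((Formula.know a φ).neg).imp
        (Formula.know a ((Formula.know a φ).neg)))
  | axEKyR {Γ} (a : A) (χ θ φ ψ) :
      SKYR Λ p0 Γ ((Formula.kyr a χ (φ.imp ψ)).imp
        ((Formula.kyr a θ φ).imp (Formula.kyr a (χ.and θ) ψ)))
  | ax4YKR {Γ} (a : A) (φ ψ) :
      SKYR Λ p0 Γ ((Formula.kyr a φ ψ).imp (Formula.know a (Formula.kyr a φ ψ)))
  | axDKyR {Γ} (a : A) (φ ψ) :
      SKYR Λ p0 Γ ((Formula.kyr a φ ψ).imp (Formula.know a (φ.imp ψ)))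
  | axIKyR {Γ} (a : A) (φ ψ χ) :
      SKYR Λ p0 Γ ((Formula.kyr a ψ χ).imp
        ((Formula.know a (φ.imp ψ)).imp (Formula.kyr a φ χ)))
  | axUKyR {Γ} (a : A) (φ ψ) :
      SKYR Λ p0 Γ ((Formula.know a φ.neg).imp (Formula.kyr a φ ψ))
  | mp {Γ φ ψ} : SKYR Λ p0 Γ (φ.imp ψ) → SKYR Λ p0 Γ φ → SKYR Λ p0 Γ ψ
  | nk {Γ} (a : A) {φ} : SKYR Λ p0 ∅ φ → SKYR Λ p0 Γ (Formula.know a φ)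
  | nkyr {Γ} (a : A) {φ} : φ ∈ Λ → SKYR Λ p0 Γ (Formula.kyr a (Formula.tru p0) φ)

/-- `Γ` is consistent in SKYR: `Γ ⊬ ⊥`. -/
def Consistent {A P : Type} (Λ : Set (Formula A P)) (p0 : P)
    (Γ : Set (Formula A P)) : Prop :=
  ¬ SKYR Λ p0 Γ (Formula.fls p0)

/-- `Γ` is maximal consistent: consistent and every proper superset is inconsistent. -/
def MaxConsistent {A P : Type} (Λ : Set (Formula A P)) (p0 : P)
    (Γ : Set (Formula A P)) : Prop :=
  Consistent Λ p0 Γ ∧ ∀ Γ' : Set (Formula A P), Γ ⊂ Γ' → ¬ Consistent Λ p0 Γ'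

section Aux

variable {A P : Type} {Λ : Set (Formula A P)} {p0 : P}

lemma propEval_neg (f : Formula A P → Prop) (φ : Formula A P) :
    PropEval f φ.neg = ¬ PropEval f φ := rfl

lemma propEval_and (f : Formula A P → Prop) (φ ψ : Formula A P) :
    PropEval f (φ.and ψ) = (PropEval f φ ∧ PropEval f ψ) := rfl

lemma propEval_imp (f : Formula A P → Prop) (φ ψ : Formula A P) :
    PropEval f (φ.imp ψ) ↔ (PropEval f φ → PropEval f ψ) := by
  simp only [Formula.imp, propEval_neg, propEval_and]; tauto

lemma propEval_fls (f : Formula A P → Prop) :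
    PropEval f (Formula.fls p0) ↔ False := by
  simp [Formula.fls, propEval_neg, propEval_and]

lemma taut_id (φ : Formula A P) : PropTaut (φ.imp φ) := by
  intro f; rw [propEval_imp]; exact id

lemma taut_k (φ ψ : Formula A P) : PropTaut (φ.imp (ψ.imp φ)) := by
  intro f; simp only [propEval_imp]; tauto

lemma taut_s (χ φ ψ : Formula A P) :
    PropTaut ((χ.imp (φ.imp ψ)).imp ((χ.imp φ).imp (χ.imp ψ))) := by
  intro f; simp only [propEval_imp]; tauto

lemma taut_neg (φ : Formula A P) :
    PropTaut ((φ.imp (Formula.fls p0)).imp φ.neg) := by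
  intro f; simp only [propEval_imp, propEval_fls, propEval_neg]; tauto

lemma skyr_mono {Γ Γ' : Set (Formula A P)} (h : Γ ⊆ Γ') {φ : Formula A P}
    (d : SKYR Λ p0 Γ φ) : SKYR Λ p0 Γ' φ := by
  induction d with
  | hyp hm => exact SKYR.hyp (h hm)
  | pt φ hφ => exact SKYR.pt φ hφ
  | axK a φ ψ => exact SKYR.axK a φ ψ
  | axT a φ => exact SKYR.axT a φ
  | ax4 a φ => exact SKYR.ax4 a φ
  | ax5 a φ => exact SKYR.ax5 a φ
  | axEKyR a χ θ φ ψ => exact SKYR.axEKyR a χ θ φ ψ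
  | ax4YKR a φ ψ => exact SKYR.ax4YKR a φ ψ
  | axDKyR a φ ψ => exact SKYR.axDKyR a φ ψ
  | axIKyR a φ ψ χ => exact SKYR.axIKyR a φ ψ χ
  | axUKyR a φ ψ => exact SKYR.axUKyR a φ ψ
  | mp _ _ ih1 ih2 => exact SKYR.mp (ih1 h) (ih2 h)
  | nk a d => exact SKYR.nk a d
  | nkyr a hφ => exact SKYR.nkyr a hφ

lemma deduction {Γ : Set (Formula A P)} {χ φ : Formula A P}
    (d : SKYR Λ p0 (insert χ Γ) φ) : SKYR Λ p0 Γ (χ.imp φ) := by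
  have weak : ∀ {ψ : Formula A P}, SKYR Λ p0 Γ ψ → SKYR Λ p0 Γ (χ.imp ψ) :=
    fun h => SKYR.mp (SKYR.pt _ (taut_k _ _)) h
  generalize hΔ : (insert χ Γ : Set (Formula A P)) = Δ at d
  induction d with
  | hyp hm =>
      subst hΔ
      rcases hm with h | h
      · rw [h]; exact SKYR.pt _ (taut_id χ)
      · exact weak (SKYR.hyp h)
  | pt φ hφ => exact weak (SKYR.pt φ hφ)
  | axK a φ ψ => exact weak (SKYR.axK a φ ψ)
  | axT a φ => exact weak (SKYR.axT a φ)
  | ax4 a φ => exact weak (SKYR.ax4 a φ)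
  | ax5 a φ => exact weak (SKYR.ax5 a φ)
  | axEKyR a χ' θ φ ψ => exact weak (SKYR.axEKyR a χ' θ φ ψ)
  | ax4YKR a φ ψ => exact weak (SKYR.ax4YKR a φ ψ)
  | axDKyR a φ ψ => exact weak (SKYR.axDKyR a φ ψ)
  | axIKyR a φ ψ χ' => exact weak (SKYR.axIKyR a φ ψ χ')
  | axUKyR a φ ψ => exact weak (SKYR.axUKyR a φ ψ)
  | mp _ _ ih1 ih2 =>
      exact SKYR.mp (SKYR.mp (SKYR.pt _ (taut_s _ _ _)) (ih1 hΔ)) (ih2 hΔ)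
  | nk a d => exact weak (SKYR.nk a d)
  | nkyr a hφ => exact weak (SKYR.nkyr a hφ)

/-- If everything derivable from `{ψ | K_aψ ∈ Γ}` becomes known by `a` over `Γ`. -/
lemma known_of_premises {Γ : Set (Formula A P)} {a : A} {φ : Formula A P}
    (d : SKYR Λ p0 {ψ : Formula A P | Formula.know a ψ ∈ Γ} φ) :
    SKYR Λ p0 Γ (Formula.know a φ) := by
  generalize hΔ : ({ψ : Formula A P | Formula.know a ψ ∈ Γ} : Set (Formula A P)) = Δ at d
  induction d with
  | hyp hm => subst hΔ; exact SKYR.hyp hm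
  | pt φ hφ => exact SKYR.nk a (SKYR.pt φ hφ)
  | axK b φ ψ => exact SKYR.nk a (SKYR.axK b φ ψ)
  | axT b φ => exact SKYR.nk a (SKYR.axT b φ)
  | ax4 b φ => exact SKYR.nk a (SKYR.ax4 b φ)
  | ax5 b φ => exact SKYR.nk a (SKYR.ax5 b φ)
  | axEKyR b χ θ φ ψ => exact SKYR.nk a (SKYR.axEKyR b χ θ φ ψ)
  | ax4YKR b φ ψ => exact SKYR.nk a (SKYR.ax4YKR b φ ψ)
  | axDKyR b φ ψ => exact SKYR.nk a (SKYR.axDKyR b φ ψ)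
  | axIKyR b φ ψ χ => exact SKYR.nk a (SKYR.axIKyR b φ ψ χ)
  | axUKyR b φ ψ => exact SKYR.nk a (SKYR.axUKyR b φ ψ)
  | mp _ _ ih1 ih2 =>
      exact SKYR.mp (SKYR.mp (SKYR.axK a _ _) (ih1 hΔ)) (ih2 hΔ)
  | nk b d => exact SKYR.nk a (SKYR.nk b d)
  | nkyr b hφ => exact SKYR.nk a (SKYR.nkyr b hφ)

lemma max_closed {Γ : Set (Formula A P)} (hΓ : MaxConsistent Λ p0 Γ)
    {χ : Formula A P} (d : SKYR Λ p0 Γ χ) : χ ∈ Γ := by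
  by_contra hχ
  have hsub : Γ ⊂ insert χ Γ := Set.ssubset_insert hχ
  have hincon := hΓ.2 _ hsub
  rw [Consistent, not_not] at hincon
  exact hΓ.1 (SKYR.mp (deduction hincon) d)

end Aux

/-- If Γ is maximal consistent w.r.t. SKYR, `Ky_a^r(φ₁,φ₂) ∉ Γ`
and `φ₁ ∉ Γ`, then `{φ₁} ∪ {ψ : K_aψ ∈ Γ}` is consistent w.r.t. SKYR. -/
theorem premise_set_consistent {A P : Type} [Countable A] [Countable P] [Infinite P]
    (Λ : Set (Formula A P)) (p0 : P) (Γ : Set (Formula A P))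
    (hΓ : MaxConsistent Λ p0 Γ) (a : A) (φ₁ φ₂ : Formula A P)
    (h1 : Formula.kyr a φ₁ φ₂ ∉ Γ) (h2 : φ₁ ∉ Γ) :
    Consistent Λ p0 ({φ₁} ∪ {ψ : Formula A P | Formula.know a ψ ∈ Γ}) := by
  intro hbot
  rw [← Set.insert_eq] at hbot
  have d1 : SKYR Λ p0 {ψ : Formula A P | Formula.know a ψ ∈ Γ}
      (φ₁.imp (Formula.fls p0)) := deduction hbot
  have d2 : SKYR Λ p0 {ψ : Formula A P | Formula.know a ψ ∈ Γ} φ₁.neg :=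
    SKYR.mp (SKYR.pt _ (taut_neg φ₁)) d1
  have d3 : SKYR Λ p0 Γ (Formula.know a φ₁.neg) := known_of_premises d2
  have d4 : SKYR Λ p0 Γ (Formula.kyr a φ₁ φ₂) :=
    SKYR.mp (SKYR.axUKyR a φ₁ φ₂) d3
  exact h1 (max_closed hΓ d4)
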